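/- arXiv:2301.04424 — 2 statements merged into one kernel-verified Lean document; each statement's English description precedes it below -/
import Mathlib

section
/- Let U ⊆ ℂ be open, let A ∈ ℂ, let B > 0 and C be real numbers, let N ≥ 1, and for j = 1,…,N let K_j ∈ ℝ and α_j, β_j ∈ ℂ be such that α_j z + β_j ≠ 0 for all z ∈ U. Then the function φ(z) = (C/B)·log(|z − A|² + B) + Σ_{j=1}^{N} K_j · log(|α_j z + β_j|²) is twice continuously differentiable on U and satisfies (1/4)Δφ(z) = C/(|z − A|² + B)² for every z ∈ U; i.e., φ is a Kähler potential on U for the metric F(z) = C/(|z − A|² + B)². -/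
open Complex

/-- The Laplacian of a function `f : ℂ → ℝ`, identifying `ℂ` with `ℝ²` via `z = x + iy`:
`Δf = ∂²f/∂x² + ∂²f/∂y²`. -/
noncomputable def planeLaplacian (f : ℂ → ℝ) (z : ℂ) : ℝ :=
  fderiv ℝ (fun w => fderiv ℝ f w 1) z 1 +
    fderiv ℝ (fun w => fderiv ℝ f w Complex.I) z Complex.I

/-!
Everything reduces to one computation. Along the line `t ↦ z + t v` the function
`|a w + b|² + c` is a real quadratic `q(t)`, and `(log q)''(0) = (q''(0) q(0) - q'(0)²) / q(0)²`.
With `p = a z + b`, summing over `v = 1` and `v = i`, the squared cross terms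
`Re (p conj (a v))` add up to `|p|² |a|²`. This leaves
`Δ log (|a w + b|² + c) = 4 |a|² c / (|p|² + c)²`, which is `4 B / (|z - A|² + B)²` for the first
term and `0` for the corrections (`c = 0`).
-/

open ComplexConjugate Filter Topology InnerProductSpace Laplacian

section LineRestriction

variable {𝕜 E F : Type*} [NontriviallyNormedField 𝕜] [NormedAddCommGroup E] [NormedSpace 𝕜 E]
  [NormedAddCommGroup F] [NormedSpace 𝕜 F] {f : E → F} {z : E}

theorem ContDiffAt.fderiv_fderiv_apply (hf : ContDiffAt 𝕜 2 f z) (u v : E) :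
    fderiv 𝕜 (fun w => fderiv 𝕜 f w v) z u = fderiv 𝕜 (fderiv 𝕜 f) z u v := by
  have hd : DifferentiableAt 𝕜 (fderiv 𝕜 f) z :=
    (hf.fderiv_right (m := 1) le_rfl).differentiableAt one_ne_zero
  simp [fderiv_clm_apply hd (differentiableAt_const v)]

theorem ContDiffAt.fderiv_fderiv_apply_self (hf : ContDiffAt 𝕜 2 f z) (v : E) :
    fderiv 𝕜 (fderiv 𝕜 f) z v v = iteratedDeriv 2 (fun t : 𝕜 => f (z + t • v)) 0 := by
  have hline : ∀ t : 𝕜, HasDerivAt (fun t : 𝕜 => z + t • v) v t := fun t => by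
    simpa using ((hasDerivAt_id t).smul_const v).const_add z
  have hline0 : Tendsto (fun t : 𝕜 => z + t • v) (𝓝 0) (𝓝 z) := by
    simpa using (hline 0).continuousAt.tendsto
  have hderiv : deriv (fun t : 𝕜 => f (z + t • v)) =ᶠ[𝓝 0] fun t => fderiv 𝕜 f (z + t • v) v := by
    filter_upwards [hline0.eventually (hf.eventually (by simp))] with t ht
    exact ((ht.differentiableAt two_ne_zero).hasFDerivAt.comp_hasDerivAt t (hline t)).deriv
  have hd : DifferentiableAt 𝕜 (fun w => fderiv 𝕜 f w v) z :=
    ((hf.fderiv_right (m := 1) le_rfl).differentiableAt one_ne_zero).clm_apply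
      (differentiableAt_const v)
  rw [iteratedDeriv_succ, iteratedDeriv_one, hderiv.deriv_eq, ← hf.fderiv_fderiv_apply]
  exact (hd.hasFDerivAt.comp_hasDerivAt_of_eq (0 : 𝕜) (hline 0) (by simp)).deriv.symm

end LineRestriction

section Laplacian

variable {E F : Type*} [NormedAddCommGroup E] [InnerProductSpace ℝ E] [FiniteDimensional ℝ E]
  [NormedAddCommGroup F] [NormedSpace ℝ F] {x : E}

theorem ContDiffAt.laplacian_fun_add {f g : E → F} (hf : ContDiffAt ℝ 2 f x)
    (hg : ContDiffAt ℝ 2 g x) : Δ (fun y => f y + g y) x = Δ f x + Δ g x :=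
  hf.laplacian_add hg

theorem ContDiffAt.laplacian_const_mul {f : E → ℝ} (c : ℝ) (hf : ContDiffAt ℝ 2 f x) :
    Δ (fun y => c * f y) x = c * Δ f x :=
  laplacian_smul c hf

theorem ContDiffAt.laplacian_sum {ι : Type*} {s : Finset ι} {f : ι → E → F}
    (h : ∀ i ∈ s, ContDiffAt ℝ 2 (f i) x) :
    Δ (fun y => ∑ i ∈ s, f i y) x = ∑ i ∈ s, Δ (f i) x := by
  classical
  induction s using Finset.induction_on with
  | empty => simp
  | insert i s hi ih =>
    simp only [Finset.sum_insert hi]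
    rw [← ih fun j hj => h j (Finset.mem_insert_of_mem hj)]
    exact (h i (s.mem_insert_self i)).laplacian_fun_add
      (ContDiffAt.sum fun j hj => h j (Finset.mem_insert_of_mem hj))

end Laplacian

theorem ContDiffAt.planeLaplacian_eq_laplacian {f : ℂ → ℝ} {z : ℂ} (hf : ContDiffAt ℝ 2 f z) :
    planeLaplacian f z = Δ f z := by
  simp [laplacian_eq_iteratedFDeriv_complexPlane, planeLaplacian, hf.fderiv_fderiv_apply,
    iteratedFDeriv_two_apply]

theorem ContDiffAt.laplacian_complexPlane_eq_iteratedDeriv {f : ℂ → ℝ} {z : ℂ}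
    (hf : ContDiffAt ℝ 2 f z) :
    Δ f z = iteratedDeriv 2 (fun t : ℝ => f (z + t)) 0 +
      iteratedDeriv 2 (fun t : ℝ => f (z + t * I)) 0 := by
  simp [laplacian_eq_iteratedFDeriv_complexPlane, iteratedFDeriv_two_apply,
    hf.fderiv_fderiv_apply_self, Complex.real_smul]

theorem iteratedDeriv_two_log_quadratic {a b c : ℝ} (hc : 0 < c) :
    iteratedDeriv 2 (fun t : ℝ => Real.log (a * t ^ 2 + b * t + c)) 0 =
      (2 * a * c - b ^ 2) / c ^ 2 := by
  set Q : ℝ → ℝ := fun t => a * t ^ 2 + b * t + c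
  have hQ : ∀ t, HasDerivAt Q (2 * a * t + b) t := fun t =>
    ((((hasDerivAt_pow 2 t).const_mul a).fun_add
      ((hasDerivAt_id' t).const_mul b)).add_const c).congr_deriv (by push_cast; ring)
  have hQ0 : Q 0 = c := by simp [Q]
  have hQpos : ∀ᶠ t in 𝓝 0, 0 < Q t :=
    (hQ 0).continuousAt.eventually (lt_mem_nhds (hQ0 ▸ hc))
  have hderiv : deriv (fun t => Real.log (Q t)) =ᶠ[𝓝 0] fun t => (2 * a * t + b) / Q t := by
    filter_upwards [hQpos] with t ht
    exact ((hQ t).log ht.ne').deriv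
  have hnum : HasDerivAt (fun t : ℝ => 2 * a * t + b) (2 * a) 0 := by
    simpa using ((hasDerivAt_id (0 : ℝ)).const_mul (2 * a)).add_const b
  rw [iteratedDeriv_succ, iteratedDeriv_one, hderiv.deriv_eq,
    (hnum.fun_div (hQ 0) (hQ0 ▸ hc.ne')).deriv, hQ0]
  ring

theorem normSq_add_ofReal_mul (p q : ℂ) (t : ℝ) :
    normSq (p + t * q) = normSq q * t ^ 2 + 2 * (p * conj q).re * t + normSq p := by
  rw [normSq_add, normSq_mul, normSq_ofReal]
  simp only [map_mul, conj_ofReal, mul_re, mul_im, ofReal_re, ofReal_im, zero_mul, sub_zero,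
    add_zero]
  ring

theorem contDiffAt_log_normSq_add {a b : ℂ} {c : ℝ} {z : ℂ} (h : normSq (a * z + b) + c ≠ 0) :
    ContDiffAt ℝ 2 (fun w => Real.log (normSq (a * w + b) + c)) z := by
  have hnormSq : ContDiff ℝ 2 normSq := by
    simpa only [← normSq_eq_norm_sq] using contDiff_norm_sq ℝ (E := ℂ)
  have haff : ContDiff ℝ 2 fun w : ℂ => a * w + b := by fun_prop
  exact ((hnormSq.comp haff).add contDiff_const).contDiffAt.log h

theorem laplacian_log_normSq_add {a b : ℂ} {c : ℝ} {z : ℂ} (hz : 0 < normSq (a * z + b) + c) :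
    Δ (fun w => Real.log (normSq (a * w + b) + c)) z =
      4 * normSq a * c / (normSq (a * z + b) + c) ^ 2 := by
  have hline : ∀ v : ℂ,
      iteratedDeriv 2 (fun t : ℝ => Real.log (normSq (a * (z + t * v) + b) + c)) 0 =
        (2 * normSq (a * v) * (normSq (a * z + b) + c) -
          (2 * ((a * z + b) * conj (a * v)).re) ^ 2) / (normSq (a * z + b) + c) ^ 2 := fun v => by
    rw [← iteratedDeriv_two_log_quadratic hz]
    congr 2 with t
    rw [show a * (z + t * v) + b = a * z + b + t * (a * v) by ring, normSq_add_ofReal_mul,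
      add_assoc]
  have hline_one := hline 1
  simp only [mul_one] at hline_one
  rw [(contDiffAt_log_normSq_add hz.ne').laplacian_complexPlane_eq_iteratedDeriv, hline I,
    hline_one, ← add_div]
  congr 1
  simp only [normSq_apply, mul_re, mul_im, conj_re, conj_im, I_re, I_im]
  ring

theorem contDiffAt_log_normSq_sub_add (A : ℂ) {B : ℝ} (hB : 0 < B) (z : ℂ) :
    ContDiffAt ℝ 2 (fun w => Real.log (normSq (w - A) + B)) z := by
  simpa [sub_eq_add_neg] using contDiffAt_log_normSq_add (a := 1) (b := -A) (z := z)
    (add_pos_of_nonneg_of_pos (normSq_nonneg _) hB).ne'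

theorem laplacian_log_normSq_sub_add (A : ℂ) {B : ℝ} (hB : 0 < B) (z : ℂ) :
    Δ (fun w => Real.log (normSq (w - A) + B)) z = 4 * B / (normSq (z - A) + B) ^ 2 := by
  simpa [sub_eq_add_neg] using laplacian_log_normSq_add (a := 1) (b := -A) (z := z)
    (add_pos_of_nonneg_of_pos (normSq_nonneg _) hB)

theorem contDiffAt_log_normSq_affine {a b z : ℂ} (h : a * z + b ≠ 0) :
    ContDiffAt ℝ 2 (fun w => Real.log (normSq (a * w + b))) z := by
  simpa using contDiffAt_log_normSq_add (c := 0) (by simpa using h)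

theorem laplacian_log_normSq_affine {a b z : ℂ} (h : a * z + b ≠ 0) :
    Δ (fun w => Real.log (normSq (a * w + b))) z = 0 := by
  simpa using laplacian_log_normSq_add (c := 0) (by simpa using normSq_pos.2 h)

theorem stmt_2_general (U : Set ℂ) (A : ℂ) (B C : ℝ) (hB : 0 < B)
    (N : ℕ) (K : Fin N → ℝ) (α β : Fin N → ℂ)
    (hαβ : ∀ j, ∀ z ∈ U, α j * z + β j ≠ 0)
    (φ : ℂ → ℝ)
    (hφ : ∀ z, φ z = (C / B) * Real.log (Complex.normSq (z - A) + B) +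
      ∑ j : Fin N, K j * Real.log (Complex.normSq (α j * z + β j))) :
    ContDiffOn ℝ 2 φ U ∧
      ∀ z ∈ U, (1 / 4) * planeLaplacian φ z = C / (Complex.normSq (z - A) + B) ^ 2 := by
  rw [show φ = _ from funext hφ]
  have hcorr : ∀ z ∈ U, ∀ j ∈ Finset.univ,
      ContDiffAt ℝ 2 (fun w => K j * Real.log (normSq (α j * w + β j))) z :=
    fun z hz j _ => contDiffAt_const.mul (contDiffAt_log_normSq_affine (hαβ j z hz))
  have hmain : ∀ z, ContDiffAt ℝ 2 (fun w => C / B * Real.log (normSq (w - A) + B)) z :=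
    fun z => contDiffAt_const.mul (contDiffAt_log_normSq_sub_add A hB z)
  have hφ_smooth : ∀ z ∈ U, ContDiffAt ℝ 2 (fun w => C / B * Real.log (normSq (w - A) + B) +
      ∑ j, K j * Real.log (normSq (α j * w + β j))) z :=
    fun z hz => (hmain z).add (ContDiffAt.sum (hcorr z hz))
  refine ⟨fun z hz => (hφ_smooth z hz).contDiffWithinAt, fun z hz => ?_⟩
  rw [(hφ_smooth z hz).planeLaplacian_eq_laplacian,
    (hmain z).laplacian_fun_add (ContDiffAt.sum (hcorr z hz)),
    (contDiffAt_log_normSq_sub_add A hB z).laplacian_const_mul, laplacian_log_normSq_sub_add A hB,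
    ContDiffAt.laplacian_sum (hcorr z hz), Finset.sum_eq_zero fun j _ => by
      rw [(contDiffAt_log_normSq_affine (hαβ j z hz)).laplacian_const_mul,
        laplacian_log_normSq_affine (hαβ j z hz), mul_zero]]
  field_simp
  ring

theorem stmt_2 (U : Set ℂ) (hU : IsOpen U) (A : ℂ) (B C : ℝ) (hB : 0 < B)
    (N : ℕ) (hN : 1 ≤ N) (K : Fin N → ℝ) (α β : Fin N → ℂ)
    (hαβ : ∀ j, ∀ z ∈ U, α j * z + β j ≠ 0)
    (φ : ℂ → ℝ)
    (hφ : ∀ z, φ z = (C / B) * Real.log (Complex.normSq (z - A) + B) +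
      ∑ j : Fin N, K j * Real.log (Complex.normSq (α j * z + β j))) :
    ContDiffOn ℝ 2 φ U ∧
      ∀ z ∈ U, (1 / 4) * planeLaplacian φ z = C / (Complex.normSq (z - A) + B) ^ 2 :=
  stmt_2_general U A B C hB N K α β hαβ φ hφ
end

section
/- Let κ ∈ ℝ, ε > 0, and let w ∈ ℂ with |w| > 1. Then the complex-valued area integral over the open unit disc satisfies ∫_{𝔻} κ/((|p|² + ε)²·(p − w)) dA(p) = −π·κ/(ε(1 + ε)·w). -/
/-!
In polar coordinates the integrand is a function of `|p|` times `(p - w)⁻¹`. Since `w` lies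
outside the closed unit disc, `(p - w)⁻¹` is holomorphic there, so by the mean value property its
average over every circle `|p| = r < 1` is `(0 - w)⁻¹`. The integral therefore collapses to
`-(2πκ / w) ∫₀¹ r / (r² + ε)² dr = -(2πκ / w) / (2ε(1 + ε))`.
-/

open Complex MeasureTheory Real Set Metric

theorem setIntegral_Ioo_neg_pi_pi_circleMap {E : Type*} [NormedAddCommGroup E] [NormedSpace ℝ E]
    (f : ℂ → E) (c : ℂ) (R : ℝ) :
    ∫ θ in Ioo (-π) π, f (circleMap c R θ) = (2 * π) • circleAverage f c R := by
  have hperiodic : Function.Periodic (fun θ ↦ f (circleMap c R θ)) (2 * π) :=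
    fun θ ↦ by simp [periodic_circleMap c R θ]
  rw [circleAverage_def, smul_inv_smul₀ (by positivity), ← integral_Ioc_eq_integral_Ioo,
    ← intervalIntegral.integral_of_le (by linarith [pi_pos]),
    ← zero_add (2 * π), ← hperiodic.intervalIntegral_add_eq (-π) 0]
  ring_nf

theorem polarCoord_target_inter_preimage_ball (R : ℝ) :
    polarCoord.target ∩ (fun p : ℝ × ℝ ↦ circleMap 0 p.1 p.2) ⁻¹' ball 0 R =
      Ioo 0 R ×ˢ Ioo (-π) π := by
  ext ⟨r, θ⟩
  simp only [polarCoord_target, mem_inter_iff, mem_prod, mem_Ioi, mem_preimage,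
    mem_ball_zero_iff, norm_circleMap_zero, mem_Ioo]
  constructor
  · rintro ⟨⟨hr, hθ⟩, hrR⟩
    exact ⟨⟨hr, by rwa [abs_of_pos hr] at hrR⟩, hθ⟩
  · rintro ⟨⟨hr, hrR⟩, hθ⟩
    exact ⟨⟨hr, hθ⟩, by rwa [abs_of_pos hr]⟩

theorem Complex.polarCoord_symm_eq_circleMap (p : ℝ × ℝ) :
    Complex.polarCoord.symm p = circleMap 0 p.1 p.2 := by
  rw [Complex.polarCoord_symm_apply, circleMap, zero_add, Complex.exp_mul_I]
  push_cast
  ring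

theorem setIntegral_ball_zero_eq_integral_circleAverage {E : Type*} [NormedAddCommGroup E]
    [NormedSpace ℝ E] {f : ℂ → E} {R : ℝ} (hf : ContinuousOn f (closedBall 0 R)) :
    ∫ p in ball 0 R, f p = ∫ r in Ioo 0 R, (2 * π * r) • circleAverage f 0 r := by
  set g : ℝ × ℝ → ℂ := fun p ↦ circleMap 0 p.1 p.2
  set F : ℝ × ℝ → E := fun p ↦ p.1 • f (g p)
  have hF : IntegrableOn F (Ioo 0 R ×ˢ Ioo (-π) π) := by
    have hmaps : MapsTo g (Icc 0 R ×ˢ Icc (-π) π) (closedBall 0 R) := fun p hp ↦ by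
      simpa [g, abs_of_nonneg hp.1.1] using hp.1.2
    have hcont : ContinuousOn F (Icc 0 R ×ˢ Icc (-π) π) :=
      continuousOn_fst.smul (hf.comp (by fun_prop) hmaps)
    exact (hcont.integrableOn_compact (isCompact_Icc.prod isCompact_Icc)).mono_set
      (prod_mono Ioo_subset_Icc_self Ioo_subset_Icc_self)
  calc ∫ p in ball 0 R, f p
      = ∫ p in polarCoord.target, p.1 • (ball 0 R).indicator f (g p) := by
        simp only [g, ← Complex.polarCoord_symm_eq_circleMap,
          Complex.integral_comp_polarCoord_symm, integral_indicator measurableSet_ball]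
    _ = ∫ p in Ioo 0 R ×ˢ Ioo (-π) π, F p := by
        rw [← polarCoord_target_inter_preimage_ball, ← setIntegral_indicator
          (measurableSet_ball.preimage (by fun_prop))]
        congr 1 with p
        rw [← indicator_comp_right g, ← indicator_smul_apply]
        rfl
    _ = ∫ r in Ioo 0 R, ∫ θ in Ioo (-π) π, r • f (circleMap 0 r θ) := by
        rw [Measure.volume_eq_prod, setIntegral_prod F hF]
    _ = ∫ r in Ioo 0 R, (2 * π * r) • circleAverage f 0 r := by
        simp only [integral_smul, setIntegral_Ioo_neg_pi_pi_circleMap, smul_smul, mul_comm]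

theorem circleAverage_comp_normSq_smul {E : Type*} [NormedAddCommGroup E] [NormedSpace ℂ E]
    (ρ : ℝ → ℂ) (f : ℂ → E) (R : ℝ) :
    circleAverage (fun z ↦ ρ (normSq z) • f z) 0 R = ρ (R ^ 2) • circleAverage f 0 R := by
  rw [← circleAverage_fun_smul]
  refine circleAverage_congr_sphere fun z hz ↦ ?_
  simp only [mem_sphere_iff_norm, sub_zero] at hz
  simp only [← Complex.sq_norm, hz, sq_abs]

theorem circleAverage_sub_inv_of_notMem_closedBall {c w : ℂ} {R : ℝ}
    (hw : w ∉ closedBall c |R|) :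
    circleAverage (fun z ↦ (z - w)⁻¹) c R = (c - w)⁻¹ := by
  refine DiffContOnCl.circleAverage (DifferentiableOn.diffContOnCl_ball (U := {w}ᶜ) ?_ ?_)
  · exact fun z hz ↦
      ((differentiableAt_id.sub_const w).inv (sub_ne_zero.2 hz)).differentiableWithinAt
  · exact fun z hz (h : z = w) ↦ hw (h ▸ hz)

theorem integral_div_sq_add_const_sq {ε : ℝ} (hε : 0 < ε) (a b : ℝ) :
    ∫ r in a..b, r / (r ^ 2 + ε) ^ 2 = ((a ^ 2 + ε)⁻¹ - (b ^ 2 + ε)⁻¹) / 2 := by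
  have hpos (r : ℝ) : r ^ 2 + ε ≠ 0 := by positivity
  have hderiv (r : ℝ) : HasDerivAt (fun x ↦ -(x ^ 2 + ε)⁻¹ / 2) (r / (r ^ 2 + ε) ^ 2) r := by
    refine ((((hasDerivAt_pow 2 r).add_const ε).inv (hpos r)).neg.div_const 2).congr_deriv ?_
    simp only [Nat.cast_ofNat, pow_one, Nat.add_one_sub_one]
    ring
  rw [intervalIntegral.integral_eq_sub_of_hasDerivAt (fun r _ ↦ hderiv r)
    ((continuous_id.div (by fun_prop) fun r ↦ pow_ne_zero 2 (hpos r)).intervalIntegrable _ _)]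
  ring

theorem stmt_7 (κ ε : ℝ) (hε : 0 < ε) (w : ℂ) (hw : 1 < ‖w‖) :
    (∫ p in Metric.ball (0 : ℂ) 1,
        (κ : ℂ) / ((((Complex.normSq p + ε : ℝ) : ℂ)) ^ 2 * (p - w))) =
      -(Real.pi : ℂ) * (κ : ℂ) / ((ε : ℂ) * (1 + (ε : ℂ)) * w) := by
  set ρ : ℝ → ℂ := fun t ↦ κ / ((t + ε : ℝ) : ℂ) ^ 2
  have hρ {t : ℝ} (ht : 0 ≤ t) : ((t + ε : ℝ) : ℂ) ≠ 0 := by norm_cast; positivity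
  have hw_notMem {r : ℝ} (hr : |r| ≤ 1) : w ∉ closedBall 0 |r| := fun h ↦ by
    rw [mem_closedBall_zero_iff] at h
    linarith
  have hcont : ContinuousOn (fun p : ℂ ↦ (κ : ℂ) / (((normSq p + ε : ℝ) : ℂ) ^ 2 * (p - w)))
      (closedBall 0 1) := by
    refine continuousOn_const.div (by fun_prop) fun p hp ↦ mul_ne_zero
      (pow_ne_zero 2 (hρ (normSq_nonneg p))) (sub_ne_zero.2 fun h ↦ ?_)
    exact hw_notMem (r := 1) (by norm_num) (by simpa [h] using hp)
  have hsplit : (fun p : ℂ ↦ (κ : ℂ) / (((normSq p + ε : ℝ) : ℂ) ^ 2 * (p - w))) =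
      fun p ↦ ρ (normSq p) • (p - w)⁻¹ := by
    ext p
    rw [smul_eq_mul, div_mul_eq_div_div, div_eq_mul_inv]
  have hav (r : ℝ) (hr : r ∈ Ioo 0 1) :
      (2 * π * r) • circleAverage (fun p ↦ ρ (normSq p) • (p - w)⁻¹) 0 r =
        (r / (r ^ 2 + ε) ^ 2) • (-(2 * π * κ / w)) := by
    rw [circleAverage_comp_normSq_smul, circleAverage_sub_inv_of_notMem_closedBall
      (hw_notMem (abs_le.2 ⟨by linarith [hr.1], hr.2.le⟩))]
    have hr₀ := hρ (sq_nonneg r)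
    simp only [ρ, Complex.real_smul, smul_eq_mul, zero_sub, inv_neg]
    push_cast at hr₀ ⊢
    field_simp
  rw [setIntegral_ball_zero_eq_integral_circleAverage hcont, hsplit,
    setIntegral_congr_fun measurableSet_Ioo hav, integral_smul_const,
    ← integral_Ioc_eq_integral_Ioo, ← intervalIntegral.integral_of_le zero_le_one,
    integral_div_sq_add_const_sq hε]
  have hε₀ : (ε : ℂ) ≠ 0 := by exact_mod_cast hε.ne'
  have hε₁ : (1 + ε : ℂ) ≠ 0 := by exact_mod_cast (by positivity : (1 + ε : ℝ) ≠ 0)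
  have hw₀ : w ≠ 0 := by rintro rfl; simp at hw; linarith
  rw [Complex.real_smul, zero_pow two_ne_zero, one_pow, zero_add]
  push_cast
  field_simp
  ring
end
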